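/- arXiv:2308.10929 — 3 statements merged into one kernel-verified Lean document; each statement's English description precedes it below -/
import Mathlib

section
/- Let H, Z be Hermitian n×n matrices and t > 0. Define the time-averaged operator Z̄ = (1/t) ∫₀ᵗ e^{isH} Z e^{-isH} ds. Then ‖Z̄ − Z‖ ≤ (t/2) · ‖[H, Z]‖. -/
/-!
The integrand `f s = e^{isH} Z e^{-isH}` has derivative `e^{isH} [iH, Z] e^{-isH}`, whose norm is
`‖[H, Z]‖` because `e^{isH}` is unitary. By the mean value inequality `‖f s - Z‖ ≤ s ‖[H, Z]‖`,
and averaging this bound over `[0, t]` gives the factor `t / 2`.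
-/

open NormedSpace Set

theorem norm_smul_integral_sub_le_of_norm_deriv_le {E : Type*} [NormedAddCommGroup E]
    [NormedSpace ℝ E] [CompleteSpace E] {f f' : ℝ → E} {M t : ℝ} (ht : 0 < t)
    (hf : ∀ s ∈ Icc 0 t, HasDerivWithinAt f (f' s) (Icc 0 t) s)
    (hf' : ∀ s ∈ Ico 0 t, ‖f' s‖ ≤ M) :
    ‖t⁻¹ • (∫ s in 0..t, f s) - f 0‖ ≤ t / 2 * M := by
  have hint : IntervalIntegrable f MeasureTheory.volume 0 t :=
    (HasDerivWithinAt.continuousOn hf).intervalIntegrable_of_Icc ht.le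
  have hlip : ∀ s ∈ Icc 0 t, ‖f s - f 0‖ ≤ M * s := fun s hs => by
    simpa using norm_image_sub_le_of_norm_deriv_le_segment' hf hf' s hs
  have hsub : t⁻¹ • (∫ s in 0..t, f s) - f 0 = t⁻¹ • ∫ s in 0..t, (f s - f 0) := by
    rw [intervalIntegral.integral_sub hint intervalIntegrable_const, intervalIntegral.integral_const,
      sub_zero, smul_sub, smul_smul, inv_mul_cancel₀ ht.ne', one_smul]
  have hbound : ‖∫ s in 0..t, (f s - f 0)‖ ≤ ∫ s in 0..t, M * s :=
    intervalIntegral.norm_integral_le_of_norm_le ht.le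
      (Filter.Eventually.of_forall fun s hs => hlip s (Ioc_subset_Icc_self hs))
      ((continuous_const_mul M).intervalIntegrable _ _)
  calc ‖t⁻¹ • (∫ s in 0..t, f s) - f 0‖ = t⁻¹ * ‖∫ s in 0..t, (f s - f 0)‖ := by
        rw [hsub, norm_smul, Real.norm_of_nonneg (inv_nonneg.2 ht.le)]
    _ ≤ t⁻¹ * ∫ s in 0..t, M * s := by gcongr
    _ = t / 2 * M := by
        rw [intervalIntegral.integral_const_mul, integral_id]
        field_simp
        ring

theorem norm_exp_mul_mul_exp_neg_of_mem_skewAdjoint {𝔸 : Type*} [NormedRing 𝔸] [StarRing 𝔸]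
    [CStarRing 𝔸] [NormedAlgebra ℚ 𝔸] [CompleteSpace 𝔸] {a : 𝔸} (ha : a ∈ skewAdjoint 𝔸)
    (c : 𝔸) : ‖exp a * c * exp (-a)‖ = ‖c‖ := by
  rw [CStarRing.norm_mul_mem_unitary _ (exp_mem_unitary_of_mem_skewAdjoint (neg_mem ha)),
    CStarRing.norm_mem_unitary_mul _ (exp_mem_unitary_of_mem_skewAdjoint ha)]

theorem hasDerivAt_exp_smul_mul_mul_exp_smul_neg {𝕂 𝔸 : Type*} [RCLike 𝕂] [NormedRing 𝔸]
    [NormedAlgebra 𝕂 𝔸] [CompleteSpace 𝔸] (a c : 𝔸) (s : 𝕂) :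
    HasDerivAt (fun u : 𝕂 => exp (u • a) * c * exp (u • -a))
      (exp (s • a) * (a * c - c * a) * exp (s • -a)) s :=
  (((hasDerivAt_exp_smul_const a s).mul_const c).mul
    (hasDerivAt_exp_smul_const' (-a) s)).congr_deriv (by noncomm_ring)

theorem norm_smul_integral_conj_exp_sub_le {𝔸 : Type*} [NormedRing 𝔸] [StarRing 𝔸]
    [CStarRing 𝔸] [NormedAlgebra ℂ 𝔸] [StarModule ℂ 𝔸] [CompleteSpace 𝔸] {H : 𝔸}
    (hH : IsSelfAdjoint H) (Z : 𝔸) {t : ℝ} (ht : 0 < t) :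
    ‖(t⁻¹ : ℝ) • (∫ s in (0:ℝ)..t,
        exp ((Complex.I * s) • H) * Z * exp ((-(Complex.I * s)) • H)) - Z‖ ≤
      (t / 2) * ‖H * Z - Z * H‖ := by
  let : NormedAlgebra ℚ 𝔸 := .restrictScalars ℚ ℂ 𝔸
  set A : 𝔸 := Complex.I • H
  have hsmul : ∀ z : ℂ, ∀ s : ℝ, (z * s) • H = s • z • H := fun z s => by
    rw [mul_comm, mul_smul, Complex.coe_smul]
  have hskew : ∀ s : ℝ, s • A ∈ skewAdjoint 𝔸 := fun s => by
    rw [← hsmul]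
    exact hH.smul_mem_skewAdjoint (by simp [skewAdjoint.mem_iff])
  have hcomm : ‖A * Z - Z * A‖ = ‖H * Z - Z * H‖ := by
    rw [smul_mul_assoc, mul_smul_comm, ← smul_sub, norm_smul, Complex.norm_I, one_mul]
  have hconj : ∀ s : ℝ, exp ((Complex.I * s) • H) * Z * exp ((-(Complex.I * s)) • H) =
      exp (s • A) * Z * exp (s • -A) := fun s => by
    rw [← neg_mul, hsmul, hsmul, neg_smul]
  simp_rw [hconj]
  simpa using norm_smul_integral_sub_le_of_norm_deriv_le ht
    (fun s _ => (hasDerivAt_exp_smul_mul_mul_exp_smul_neg (𝕂 := ℝ) A Z s).hasDerivWithinAt)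
    (fun s _ => by rw [smul_neg, norm_exp_mul_mul_exp_neg_of_mem_skewAdjoint (hskew s), hcomm])

theorem stmt_3_general {n : ℕ}
    (H Z : EuclideanSpace ℂ (Fin n) →L[ℂ] EuclideanSpace ℂ (Fin n))
    (hH : IsSelfAdjoint H) (t : ℝ) (ht : 0 < t) :
    ‖(t⁻¹ : ℝ) • (∫ s in (0:ℝ)..t,
        exp ((Complex.I * s) • H) * Z * exp ((-(Complex.I * s)) • H)) - Z‖ ≤
      (t / 2) * ‖H * Z - Z * H‖ :=
  norm_smul_integral_conj_exp_sub_le hH Z ht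

/-- For Hermitian `H, Z` and `t > 0`, the time average
`Z̄ = (1/t) ∫₀ᵗ e^{isH} Z e^{-isH} ds` satisfies `‖Z̄ − Z‖ ≤ (t/2) ‖[H,Z]‖`. -/
theorem stmt_3 {n : ℕ}
    (H Z : EuclideanSpace ℂ (Fin n) →L[ℂ] EuclideanSpace ℂ (Fin n))
    (hH : IsSelfAdjoint H) (hZ : IsSelfAdjoint Z) (t : ℝ) (ht : 0 < t) :
    ‖(t⁻¹ : ℝ) • (∫ s in (0:ℝ)..t,
        exp ((Complex.I * s) • H) * Z * exp ((-(Complex.I * s)) • H)) - Z‖ ≤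
      (t / 2) * ‖H * Z - Z * H‖ :=
  stmt_3_general H Z hH t ht
end

section
/- Let M and M' be traceless Hermitian 2×2 matrices. Then there exists an orthonormal basis {e₀, e₁} of ℂ² such that ⟨e₀|M|e₀⟩ = ⟨e₁|M|e₁⟩ = 0 and ⟨e₀|M'|e₀⟩ = ⟨e₁|M'|e₁⟩ = 0 (simultaneous zero-diagonalization of two traceless Hermitian matrices). -/
open Matrix Complex

lemma unit_orth_one (a₁ a₂ a₃ : ℝ) :
    ∃ q₁ q₂ q₃ : ℝ, q₁^2+q₂^2+q₃^2 = 1 ∧ a₁*q₁+a₂*q₂+a₃*q₃ = 0 := by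
  by_cases h : a₂ = 0 ∧ a₃ = 0
  · exact ⟨0, 1, 0, by ring, by simp [h.1]⟩
  · have hpos : 0 < a₂^2 + a₃^2 := by
      rcases not_and_or.mp h with h' | h' <;> positivity
    set n := Real.sqrt (a₂^2 + a₃^2) with hn
    have hn2 : n^2 = a₂^2 + a₃^2 := Real.sq_sqrt hpos.le
    have hnpos : 0 < n := Real.sqrt_pos.mpr hpos
    refine ⟨0, a₃/n, -a₂/n, ?_, by field_simp; ring⟩
    field_simp
    linarith [hn2]

lemma unit_orth_two (a₁ a₂ a₃ b₁ b₂ b₃ : ℝ) :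
    ∃ q₁ q₂ q₃ : ℝ, q₁^2+q₂^2+q₃^2 = 1 ∧ a₁*q₁+a₂*q₂+a₃*q₃ = 0 ∧
      b₁*q₁+b₂*q₂+b₃*q₃ = 0 := by
  set c₁ := a₂*b₃ - a₃*b₂
  set c₂ := a₃*b₁ - a₁*b₃
  set c₃ := a₁*b₂ - a₂*b₁
  by_cases hc : c₁ = 0 ∧ c₂ = 0 ∧ c₃ = 0
  · obtain ⟨h1, h2, h3⟩ := hc
    by_cases ha : a₁ = 0 ∧ a₂ = 0 ∧ a₃ = 0
    · obtain ⟨q₁, q₂, q₃, hq, hb⟩ := unit_orth_one b₁ b₂ b₃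
      exact ⟨q₁, q₂, q₃, hq, by simp [ha.1, ha.2.1, ha.2.2], hb⟩
    · obtain ⟨q₁, q₂, q₃, hq, hb⟩ := unit_orth_one a₁ a₂ a₃
      refine ⟨q₁, q₂, q₃, hq, hb, ?_⟩
      have hA : 0 < a₁^2 + a₂^2 + a₃^2 := by
        rcases not_and_or.mp ha with h | h
        · positivity
        rcases not_and_or.mp h with h | h <;> positivity
      have key : (a₁^2+a₂^2+a₃^2) * (b₁*q₁+b₂*q₂+b₃*q₃)
          = (a₁*b₁+a₂*b₂+a₃*b₃) * (a₁*q₁+a₂*q₂+a₃*q₃)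
            + c₁*(a₂*q₃-a₃*q₂) + c₂*(a₃*q₁-a₁*q₃) + c₃*(a₁*q₂-a₂*q₁) := by
        simp only [c₁, c₂, c₃]; ring
      rw [h1, h2, h3, hb] at key
      simp at key
      rcases key with key | key
      · linarith
      · exact key
  · have hpos : 0 < c₁^2 + c₂^2 + c₃^2 := by
      rcases not_and_or.mp hc with h | h
      · positivity
      rcases not_and_or.mp h with h | h <;> positivity
    set n := Real.sqrt (c₁^2 + c₂^2 + c₃^2) with hn
    have hn2 : n^2 = c₁^2 + c₂^2 + c₃^2 := Real.sq_sqrt hpos.le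
    have hnpos : 0 < n := Real.sqrt_pos.mpr hpos
    refine ⟨c₁/n, c₂/n, c₃/n, ?_, ?_, ?_⟩
    · field_simp; linarith [hn2]
    · field_simp; simp only [c₁, c₂, c₃]; ring
    · field_simp; simp only [c₁, c₂, c₃]; ring

lemma entries (M : Matrix (Fin 2) (Fin 2) ℂ) (hM : M.IsHermitian) (htr : M.trace = 0) :
    M 0 0 = ((M 0 0).re : ℂ) ∧ M 1 1 = -((M 0 0).re : ℂ) ∧
    M 1 0 = ((M 0 1).re : ℂ) - (M 0 1).im * Complex.I ∧
    M 0 1 = ((M 0 1).re : ℂ) + (M 0 1).im * Complex.I := by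
  have h00 : M 0 0 = ((M 0 0).re : ℂ) := (Complex.conj_eq_iff_re.mp (hM.apply 0 0)).symm
  refine ⟨h00, ?_, ?_, by simp [Complex.ext_iff]⟩
  · rw [Matrix.trace_fin_two] at htr; rw [← h00]; linear_combination htr
  · rw [← (hM.apply 1 0)]; simp [Complex.ext_iff]

/-- Two traceless Hermitian 2×2 matrices can be simultaneously zero-diagonalized:
there is an orthonormal basis `{e₀, e₁}` of `ℂ²` in which both have vanishing
diagonal matrix elements. -/
theorem stmt_7 (M M' : Matrix (Fin 2) (Fin 2) ℂ)
    (hM : M.IsHermitian) (hM' : M'.IsHermitian)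
    (htr : M.trace = 0) (htr' : M'.trace = 0) :
    ∃ e₀ e₁ : Fin 2 → ℂ,
      star e₀ ⬝ᵥ e₀ = 1 ∧ star e₁ ⬝ᵥ e₁ = 1 ∧ star e₀ ⬝ᵥ e₁ = 0 ∧
      star e₀ ⬝ᵥ (M *ᵥ e₀) = 0 ∧ star e₁ ⬝ᵥ (M *ᵥ e₁) = 0 ∧
      star e₀ ⬝ᵥ (M' *ᵥ e₀) = 0 ∧ star e₁ ⬝ᵥ (M' *ᵥ e₁) = 0 := by
  obtain ⟨h00, h11, h10, h01⟩ := entries M hM htr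
  obtain ⟨h00', h11', h10', h01'⟩ := entries M' hM' htr'
  set c : ℝ := (M 0 0).re
  set x : ℝ := (M 0 1).re
  set y : ℝ := (M 0 1).im
  set c' : ℝ := (M' 0 0).re
  set x' : ℝ := (M' 0 1).re
  set y' : ℝ := (M' 0 1).im
  obtain ⟨q₁, q₂, q₃, hq, hA, hB⟩ := unit_orth_two c x (-y) c' x' (-y')
  have hq1 : -1 ≤ q₁ := by nlinarith
  by_cases hcase : q₁ = -1
  · have hq2 : q₂ = 0 := by nlinarith
    have hq3 : q₃ = 0 := by nlinarith
    have hc : c = 0 := by rw [hcase, hq2, hq3] at hA; linarith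
    have hc' : c' = 0 := by rw [hcase, hq2, hq3] at hB; linarith
    refine ⟨![0, 1], ![1, 0], ?_, ?_, ?_, ?_, ?_, ?_, ?_⟩ <;>
      simp [dotProduct, mulVec, Fin.sum_univ_two, h00, h11, h00', h11', hc, hc']
  · have hapos : 0 < (1 + q₁)/2 := by
      rcases lt_or_eq_of_le hq1 with h | h
      · linarith
      · exact absurd h.symm hcase
    set a : ℝ := Real.sqrt ((1 + q₁)/2) with hadef
    have ha2 : a^2 = (1 + q₁)/2 := Real.sq_sqrt hapos.le
    have ha0 : 0 < a := Real.sqrt_pos.mpr hapos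
    have haC : (a : ℂ) ≠ 0 := by exact_mod_cast ha0.ne'
    set b : ℂ := (q₂ + q₃ * Complex.I) / (2 * a) with hb
    have hI : Complex.I^2 = -1 := Complex.I_sq
    have hq' : (q₁:ℂ)^2 + (q₂:ℂ)^2 + (q₃:ℂ)^2 = 1 := by
      have := congrArg (Complex.ofReal) hq; push_cast at this; exact this
    have hA' : (c:ℂ)*q₁ + x*q₂ - y*q₃ = 0 := by
      have := congrArg (Complex.ofReal) hA; push_cast at this; linear_combination this
    have hB' : (c':ℂ)*q₁ + x'*q₂ - y'*q₃ = 0 := by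
      have := congrArg (Complex.ofReal) hB; push_cast at this; linear_combination this
    have ha2C : (a:ℂ)^2 = (1 + q₁)/2 := by
      have := congrArg (Complex.ofReal) ha2; push_cast at this; exact this
    have hinv : (a:ℂ) * (a:ℂ)⁻¹ = 1 := mul_inv_cancel₀ haC
    refine ⟨![(a : ℂ), b], ![-(starRingEnd ℂ b), (a : ℂ)], ?_, ?_, ?_, ?_, ?_, ?_, ?_⟩ <;>
      simp only [dotProduct, mulVec, Fin.sum_univ_two, Matrix.cons_val_zero,
        Matrix.cons_val_one, Matrix.head_cons, Pi.star_apply, star_def,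
        h00, h11, h10, h01, h00', h11', h10', h01', hb, map_div₀, _root_.map_mul,
        _root_.map_add, Complex.conj_ofReal, Complex.conj_I, map_neg, map_ofNat,
        RingHom.map_one, starRingEnd_self_apply, neg_neg]
    · linear_combination ((2*(a:ℂ)^2 - 1 + (q₁:ℂ))/(2*(a:ℂ)^2)) * ha2C
        + (1/(4*(a:ℂ)^2)) * hq' - ((q₃:ℂ)^2/(4*(a:ℂ)^2)) * hI + ((1-(a:ℂ)^2)*((a:ℂ)*(a:ℂ)⁻¹+1)) * hinv
    · linear_combination ((2*(a:ℂ)^2 - 1 + (q₁:ℂ))/(2*(a:ℂ)^2)) * ha2C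
        + (1/(4*(a:ℂ)^2)) * hq' - ((q₃:ℂ)^2/(4*(a:ℂ)^2)) * hI + ((1-(a:ℂ)^2)*((a:ℂ)*(a:ℂ)⁻¹+1)) * hinv
    · ring
    · linear_combination ((c:ℂ)*(2*(a:ℂ)^2 + 1 - (q₁:ℂ))/(2*(a:ℂ)^2)) * ha2C + hA'
        - ((c:ℂ)/(4*(a:ℂ)^2)) * hq' + ((y:ℂ)*q₃ + (c:ℂ)*(q₃:ℂ)^2/(4*(a:ℂ)^2)) * hI + ((x:ℂ)*q₂ + (y:ℂ)*Complex.I^2*q₃ + ((a:ℂ)*(a:ℂ)⁻¹+1)*(c:ℂ)*((q₁:ℂ) - (a:ℂ)^2)) * hinv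
    · linear_combination (-((c:ℂ)*(2*(a:ℂ)^2 + 1 - (q₁:ℂ))/(2*(a:ℂ)^2))) * ha2C - hA'
        + ((c:ℂ)/(4*(a:ℂ)^2)) * hq' - ((y:ℂ)*q₃ + (c:ℂ)*(q₃:ℂ)^2/(4*(a:ℂ)^2)) * hI - ((x:ℂ)*q₂ + (y:ℂ)*Complex.I^2*q₃ + ((a:ℂ)*(a:ℂ)⁻¹+1)*(c:ℂ)*((q₁:ℂ) - (a:ℂ)^2)) * hinv
    · linear_combination ((c':ℂ)*(2*(a:ℂ)^2 + 1 - (q₁:ℂ))/(2*(a:ℂ)^2)) * ha2C + hB'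
        - ((c':ℂ)/(4*(a:ℂ)^2)) * hq' + ((y':ℂ)*q₃ + (c':ℂ)*(q₃:ℂ)^2/(4*(a:ℂ)^2)) * hI + ((x':ℂ)*q₂ + (y':ℂ)*Complex.I^2*q₃ + ((a:ℂ)*(a:ℂ)⁻¹+1)*(c':ℂ)*((q₁:ℂ) - (a:ℂ)^2)) * hinv
    · linear_combination (-((c':ℂ)*(2*(a:ℂ)^2 + 1 - (q₁:ℂ))/(2*(a:ℂ)^2))) * ha2C - hB'
        + ((c':ℂ)/(4*(a:ℂ)^2)) * hq' - ((y':ℂ)*q₃ + (c':ℂ)*(q₃:ℂ)^2/(4*(a:ℂ)^2)) * hI - ((x':ℂ)*q₂ + (y':ℂ)*Complex.I^2*q₃ + ((a:ℂ)*(a:ℂ)⁻¹+1)*(c':ℂ)*((q₁:ℂ) - (a:ℂ)^2)) * hinv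
end

section
/- Let U(ω) = e^{-itωZ} e^{itH_ω} where H_ω = V + ωZ with V, Z Hermitian n×n matrices and t > 0. Then for any ω, ω' ∈ ℝ, ‖U(ω') − U(ω)‖ ≤ t² |ω' − ω| · ‖[Z, V]‖. -/
/-!
Write `x = iZ`, `w = iV` (skew-adjoint) and `H_ω = w + ωx`. The function
`G(u) = e^{-uH_{ω'}} e^{u(ω'-ω)x} e^{uH_ω}` satisfies `G(0) = 1` and `U(ω') G(t) = U(ω)`, so
`‖U(ω') - U(ω)‖ = ‖G(t) - G(0)‖` by unitarity. Its derivative is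
`e^{-uH_{ω'}} [e^{u(ω'-ω)x}, w] e^{uH_ω}`, whose norm is at most `|u| |ω' - ω| ‖[x, w]‖` by the
Duhamel estimate `‖[e^{sx}, a]‖ ≤ |s| ‖[x, a]‖`; the mean value theorem on `[-|t|, |t|]` concludes.
-/

open NormedSpace

section BanachAlgebra

variable {𝕂 𝔸 : Type*} [RCLike 𝕂] [NormedRing 𝔸] [NormedAlgebra 𝕂 𝔸] [CompleteSpace 𝔸]

theorem hasDerivAt_exp_smul_mul_mul_exp_smul (a c : 𝔸) {f : 𝕂 → 𝔸} {f' : 𝔸} {u : 𝕂}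
    (hf : HasDerivAt f f' u) :
    HasDerivAt (fun u => exp (u • a) * f u * exp (u • c))
      (exp (u • a) * (a * f u + f' + f u * c) * exp (u • c)) u := by
  refine (((hasDerivAt_exp_smul_const a u).mul hf).mul
    (hasDerivAt_exp_smul_const' c u)).congr_deriv ?_
  simp only [Pi.mul_apply]
  noncomm_ring

end BanachAlgebra

namespace CStarAlgebra

variable {A : Type*} [CStarAlgebra A]

-- The `NormedSpace.exp` API is stated for normed `ℚ`-algebras.
noncomputable abbrev normedAlgebraRat : NormedAlgebra ℚ A := NormedAlgebra.restrictScalars ℚ ℂ A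

attribute [local instance] normedAlgebraRat

theorem exp_mul_exp_neg (x : A) : exp x * exp (-x) = 1 := by
  rw [← exp_add_of_commute (Commute.refl x).neg_right, add_neg_cancel, exp_zero]

theorem exp_neg_mul_exp (x : A) : exp (-x) * exp x = 1 := by
  rw [← exp_add_of_commute (Commute.refl x).neg_left, neg_add_cancel, exp_zero]

theorem norm_exp_mul {x : A} (hx : x ∈ skewAdjoint A) (a : A) : ‖exp x * a‖ = ‖a‖ :=
  CStarRing.norm_coe_unitary_mul ⟨_, exp_mem_unitary_of_mem_skewAdjoint hx⟩ a

theorem norm_mul_exp {x : A} (hx : x ∈ skewAdjoint A) (a : A) : ‖a * exp x‖ = ‖a‖ :=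
  CStarRing.norm_mul_coe_unitary a ⟨_, exp_mem_unitary_of_mem_skewAdjoint hx⟩

/-- Duhamel: `u ↦ e^{ux} a e^{-ux}` has derivative `e^{ux} [x, a] e^{-ux}`, of norm `‖[x, a]‖`. -/
theorem norm_exp_smul_mul_sub_mul_exp_smul_le {x : A} (hx : x ∈ skewAdjoint A) (a : A) (s : ℝ) :
    ‖exp (s • x) * a - a * exp (s • x)‖ ≤ |s| * ‖x * a - a * x‖ := by
  have hsx (u : ℝ) : u • x ∈ skewAdjoint A := skewAdjoint.smul_mem u hx
  have hsnx (u : ℝ) : -(u • x) ∈ skewAdjoint A := neg_mem (hsx u)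
  have hderiv (u : ℝ) : HasDerivAt (fun u : ℝ => exp (u • x) * a * exp (u • -x))
      (exp (u • x) * (x * a - a * x) * exp (u • -x)) u := by
    convert hasDerivAt_exp_smul_mul_mul_exp_smul x (-x) (hasDerivAt_const u a) using 1
    noncomm_ring
  have hmvt := convex_univ.norm_image_sub_le_of_norm_hasDerivWithin_le
    (fun u _ => (hderiv u).hasDerivWithinAt)
    (fun u _ => by rw [smul_neg, norm_mul_exp (hsnx u), norm_exp_mul (hsx u)])
    (Set.mem_univ 0) (Set.mem_univ s)
  have hconj : exp (s • x) * a - a * exp (s • x)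
      = (exp (s • x) * a * exp (s • -x) - a) * exp (s • x) := by
    rw [sub_mul, mul_assoc _ (exp _), smul_neg, exp_neg_mul_exp, mul_one]
  rw [hconj, norm_mul_exp (hsx s)]
  simpa [mul_comm] using hmvt

/-- With `x = iZ`, `w = iV` this is `U(ω) = e^{-itωZ} e^{it(V + ωZ)}`. -/
noncomputable def interactionUnitary (x w : A) (t ω : ℝ) : A :=
  exp ((-(t * ω)) • x) * exp (t • (w + ω • x))

theorem interactionUnitary_mul_exp_mul_exp_mul_exp (x w : A) (t ω ω' : ℝ) :
    interactionUnitary x w t ω' *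
        (exp (t • -(w + ω' • x)) * exp (t • (ω' - ω) • x) * exp (t • (w + ω • x))) =
      interactionUnitary x w t ω := by
  have hcomm : Commute ((-(t * ω')) • x) (t • (ω' - ω) • x) :=
    ((Commute.refl x).smul_left _).smul_right _ |>.smul_right _
  calc exp ((-(t * ω')) • x) * exp (t • (w + ω' • x)) *
        (exp (t • -(w + ω' • x)) * exp (t • (ω' - ω) • x) * exp (t • (w + ω • x)))
      = exp ((-(t * ω')) • x) * (exp (t • (w + ω' • x)) * exp (-(t • (w + ω' • x)))) *
          exp (t • (ω' - ω) • x) * exp (t • (w + ω • x)) := by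
        rw [smul_neg]; noncomm_ring
    _ = exp ((-(t * ω')) • x + t • (ω' - ω) • x) * exp (t • (w + ω • x)) := by
        rw [exp_mul_exp_neg, mul_one, exp_add_of_commute hcomm]
    _ = exp ((-(t * ω)) • x) * exp (t • (w + ω • x)) := by congr 2; module

theorem norm_interactionUnitary_sub_le {x w : A} (hx : x ∈ skewAdjoint A)
    (hw : w ∈ skewAdjoint A) (t ω ω' : ℝ) :
    ‖interactionUnitary x w t ω' - interactionUnitary x w t ω‖
      ≤ t ^ 2 * |ω' - ω| * ‖x * w - w * x‖ := by
  set H := w + ω • x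
  set H' := w + ω' • x
  have hH (u : ℝ) : u • H ∈ skewAdjoint A :=
    skewAdjoint.smul_mem u (add_mem hw (skewAdjoint.smul_mem ω hx))
  have hH' (u : ℝ) : u • H' ∈ skewAdjoint A :=
    skewAdjoint.smul_mem u (add_mem hw (skewAdjoint.smul_mem ω' hx))
  set P : ℝ → A := fun u => exp (u • (ω' - ω) • x)
  set G : ℝ → A := fun u => exp (u • -H') * P u * exp (u • H)
  have hderiv (u : ℝ) : HasDerivAt G (exp (u • -H') * (P u * w - w * P u) * exp (u • H)) u := by
    refine (hasDerivAt_exp_smul_mul_mul_exp_smul (-H') H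
      (hasDerivAt_exp_smul_const' ((ω' - ω) • x) u)).congr_deriv ?_
    have hxP : x * P u = P u * x :=
      ((Commute.refl x).smul_right (ω' - ω) |>.smul_right u |>.exp_right).eq
    have hmid : -H' * P u + (ω' - ω) • x * P u + P u * H = P u * w - w * P u := by
      simp only [H, H', neg_mul, add_mul, mul_add, smul_mul_assoc, mul_smul_comm, hxP]
      module
    rw [hmid]
  have hbound (u : ℝ) (hu : u ∈ Metric.closedBall 0 |t|) :
      ‖exp (u • -H') * (P u * w - w * P u) * exp (u • H)‖ ≤ |t| * |ω' - ω| * ‖x * w - w * x‖ := by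
    rw [smul_neg, norm_mul_exp (hH u), norm_exp_mul (neg_mem (hH' u))]
    calc ‖P u * w - w * P u‖ ≤ |u * (ω' - ω)| * ‖x * w - w * x‖ := by
          simpa only [P, smul_smul] using norm_exp_smul_mul_sub_mul_exp_smul_le hx w (u * (ω' - ω))
      _ ≤ |t| * |ω' - ω| * ‖x * w - w * x‖ := by
          rw [abs_mul]
          gcongr ?_ * _ * _
          simpa using hu
  have hmvt := (convex_closedBall 0 |t|).norm_image_sub_le_of_norm_hasDerivWithin_le
    (fun u _ => (hderiv u).hasDerivWithinAt) hbound
    (Metric.mem_closedBall_self (abs_nonneg t)) (y := t) (by simp)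
  have hG0 : G 0 = 1 := by simp [G, P]
  have hGt : interactionUnitary x w t ω' * G t = interactionUnitary x w t ω :=
    interactionUnitary_mul_exp_mul_exp_mul_exp x w t ω ω'
  calc ‖interactionUnitary x w t ω' - interactionUnitary x w t ω‖ = ‖G t - G 0‖ := by
        rw [← hGt, hG0, ← mul_one_sub, interactionUnitary, mul_assoc,
          norm_exp_mul (skewAdjoint.smul_mem _ hx), norm_exp_mul (hH' t), norm_sub_rev]
    _ ≤ |t| * |ω' - ω| * ‖x * w - w * x‖ * ‖t - 0‖ := hmvt
    _ = t ^ 2 * |ω' - ω| * ‖x * w - w * x‖ := by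
        rw [sub_zero, Real.norm_eq_abs, ← sq_abs t]
        ring

end CStarAlgebra

theorem stmt_19_general {n : ℕ}
    (V Z : EuclideanSpace ℂ (Fin n) →L[ℂ] EuclideanSpace ℂ (Fin n))
    (hV : IsSelfAdjoint V) (hZ : IsSelfAdjoint Z) (t : ℝ) (ω ω' : ℝ) :
    ‖exp ((-(Complex.I * (t * ω'))) • Z) * exp ((Complex.I * t) • (V + (ω' : ℂ) • Z)) -
        exp ((-(Complex.I * (t * ω))) • Z) * exp ((Complex.I * t) • (V + (ω : ℂ) • Z))‖ ≤
      t ^ 2 * |ω' - ω| * ‖Z * V - V * Z‖ := by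
  have hI : Complex.I ∈ skewAdjoint ℂ := Complex.conj_I
  have hU (ω : ℝ) : CStarAlgebra.interactionUnitary (Complex.I • Z) (Complex.I • V) t ω =
      exp ((-(Complex.I * (t * ω))) • Z) * exp ((Complex.I * t) • (V + (ω : ℂ) • Z)) := by
    rw [CStarAlgebra.interactionUnitary]
    congr 2 <;> module
  have hcomm : Complex.I • Z * Complex.I • V - Complex.I • V * Complex.I • Z = -(Z * V - V * Z) := by
    simp only [smul_mul_assoc, mul_smul_comm, smul_smul, Complex.I_mul_I]
    module
  simpa only [hU, hcomm, norm_neg] using CStarAlgebra.norm_interactionUnitary_sub_le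
    (hZ.smul_mem_skewAdjoint hI) (hV.smul_mem_skewAdjoint hI) t ω ω'

/-- Stability of the interaction-picture unitary `U(ω) = e^{-itωZ} e^{itH_ω}` with
`H_ω = V + ωZ`: `‖U(ω') − U(ω)‖ ≤ t²|ω' − ω|·‖[Z,V]‖`. -/
theorem stmt_19 {n : ℕ}
    (V Z : EuclideanSpace ℂ (Fin n) →L[ℂ] EuclideanSpace ℂ (Fin n))
    (hV : IsSelfAdjoint V) (hZ : IsSelfAdjoint Z) (t : ℝ) (ht : 0 < t) (ω ω' : ℝ) :
    ‖exp ((-(Complex.I * (t * ω'))) • Z) * exp ((Complex.I * t) • (V + (ω' : ℂ) • Z)) -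
        exp ((-(Complex.I * (t * ω))) • Z) * exp ((Complex.I * t) • (V + (ω : ℂ) • Z))‖ ≤
      t ^ 2 * |ω' - ω| * ‖Z * V - V * Z‖ :=
  stmt_19_general V Z hV hZ t ω ω'
end
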